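/- arXiv:1906.04869 — 3 statements merged into one kernel-verified Lean document; each statement's English description precedes it below -/
import Mathlib

section
/- Let V, W be real Hilbert spaces and T : V → W a bounded linear operator such that for every v ∈ V, ‖T v‖_W equals the infimum of ‖u‖_V over all u ∈ V with T u = T v (the minimum energy extension norm property). Then the range of T is a closed subspace of W. -/
/-!
The infimum in the hypothesis is exactly the quotient norm of `v` modulo `ker T`, so the map
induced by `T` on `V ⧸ ker T` is a linear isometry. Its domain is complete, being a quotient of a
complete space, hence its range, which is the range of `T`, is complete and therefore closed.
-/

namespace LinearMap

variable {R V W : Type*} [Ring R] [SeminormedAddCommGroup V] [Module R V]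

theorem sInf_norm_fiber_eq_norm_mk_ker [AddCommGroup W] [Module R W] (T : V →ₗ[R] W) (v : V) :
    sInf {r : ℝ | ∃ u : V, T u = T v ∧ r = ‖u‖} = ‖(Submodule.Quotient.mk v : V ⧸ ker T)‖ := by
  have mk_eq_iff (u : V) : (Submodule.Quotient.mk u : V ⧸ ker T) = Submodule.Quotient.mk v ↔
      T u = T v := by
    rw [Submodule.Quotient.eq, mem_ker, map_sub, sub_eq_zero]
  apply le_antisymm
  · refine le_of_forall_pos_lt_add fun ε hε => ?_
    obtain ⟨u, hu, hlt⟩ := Submodule.Quotient.norm_mk_lt (Submodule.Quotient.mk v : V ⧸ ker T) hε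
    have hbdd : BddBelow {r : ℝ | ∃ u : V, T u = T v ∧ r = ‖u‖} :=
      ⟨0, by rintro _ ⟨w, -, rfl⟩; exact norm_nonneg w⟩
    exact (csInf_le hbdd ⟨u, (mk_eq_iff u).1 hu, rfl⟩).trans_lt hlt
  · refine le_csInf ⟨‖v‖, v, rfl, rfl⟩ ?_
    rintro _ ⟨u, hu, rfl⟩
    rw [← (mk_eq_iff u).2 hu]
    exact Submodule.Quotient.norm_mk_le _ u

theorem isClosed_range_of_norm_eq_norm_mk_ker [CompleteSpace V] [NormedAddCommGroup W]
    [Module R W] (T : V →ₗ[R] W)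
    (hT : ∀ v, ‖T v‖ = ‖(Submodule.Quotient.mk v : V ⧸ ker T)‖) :
    IsClosed (Set.range T) := by
  let T' : V ⧸ ker T →ₗᵢ[R] W :=
    { toLinearMap := (ker T).liftQ T le_rfl
      norm_map' := fun x => Submodule.Quotient.induction_on _ x hT }
  have hrange : Set.range T' = Set.range T :=
    (Submodule.mkQ_surjective (ker T)).range_comp T' |>.symm
  rw [← hrange]
  exact (T'.isometry.isUniformInducing.isComplete_range).isClosed

end LinearMap

theorem range_closed_of_min_energy_norm_general
    {V W : Type*} [NormedAddCommGroup V] [InnerProductSpace ℝ V] [CompleteSpace V]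
    [NormedAddCommGroup W] [InnerProductSpace ℝ W]
    (T : V →L[ℝ] W)
    (hmin : ∀ v : V, ‖T v‖ = sInf {r : ℝ | ∃ u : V, T u = T v ∧ r = ‖u‖}) :
    IsClosed (Set.range T) :=
  (T : V →ₗ[ℝ] W).isClosed_range_of_norm_eq_norm_mk_ker fun v =>
    (hmin v).trans ((T : V →ₗ[ℝ] W).sInf_norm_fiber_eq_norm_mk_ker v)

/-- If a bounded linear operator between Hilbert spaces realizes the minimum energy
extension norm (`‖T v‖` equals the infimum of `‖u‖` over preimages of `T v`),
then its range is closed. -/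
theorem range_closed_of_min_energy_norm
    {V W : Type*} [NormedAddCommGroup V] [InnerProductSpace ℝ V] [CompleteSpace V]
    [NormedAddCommGroup W] [InnerProductSpace ℝ W] [CompleteSpace W]
    (T : V →L[ℝ] W)
    (hmin : ∀ v : V, ‖T v‖ = sInf {r : ℝ | ∃ u : V, T u = T v ∧ r = ‖u‖}) :
    IsClosed (Set.range T) :=
  range_closed_of_min_energy_norm_general T hmin
end

section
/- Let X₀, X̂, Y be real Hilbert spaces, X = X₀ × X̂, and let b(x, y) = b₀(x₀, y) + b̂(x̂, y) be bounded bilinear forms. Suppose: (i) Y₀ := {y ∈ Y : b̂(x̂, y) = 0 for all x̂ ∈ X̂} satisfies sup_{0≠y∈Y₀} b₀(x₀, y)/‖y‖ ≥ γ₀‖x₀‖ for all x₀ ∈ X₀; (ii) sup_{0≠y∈Y} b̂(x̂, y)/‖y‖ ≥ γ̂‖x̂‖ for all x̂ ∈ X̂. Then there exists γ > 0 depending only on γ₀, γ̂ and the boundedness constants such that sup_{0≠y∈Y} b(x, y)/‖y‖ ≥ γ‖x‖ for all x ∈ X. -/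
/-- Abstract inf-sup splitting (Carstensen–Demkowicz–Gopalakrishnan): an inf-sup
condition for `b₀` on the kernel `Y₀` of the trace form `b̂`, together with an
inf-sup condition for `b̂` on all of `Y`, yields a combined inf-sup condition
for `b(x,y) = b₀(x₀,y) + b̂(x̂,y)` on the product space. -/
theorem infsup_splitting
    {X₀ Xh Y : Type*}
    [NormedAddCommGroup X₀] [InnerProductSpace ℝ X₀] [CompleteSpace X₀]
    [NormedAddCommGroup Xh] [InnerProductSpace ℝ Xh] [CompleteSpace Xh]
    [NormedAddCommGroup Y] [InnerProductSpace ℝ Y] [CompleteSpace Y]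
    (b₀ : X₀ →L[ℝ] Y →L[ℝ] ℝ) (bh : Xh →L[ℝ] Y →L[ℝ] ℝ)
    (γ₀ γh : ℝ) (hγ₀ : 0 < γ₀) (hγh : 0 < γh)
    (h₀ : ∀ x₀ : X₀, γ₀ * ‖x₀‖ ≤
      sSup {r : ℝ | ∃ y : Y, (∀ xh : Xh, bh xh y = 0) ∧ y ≠ 0 ∧ r = b₀ x₀ y / ‖y‖})
    (hh : ∀ xh : Xh, γh * ‖xh‖ ≤
      sSup {r : ℝ | ∃ y : Y, y ≠ 0 ∧ r = bh xh y / ‖y‖}) :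
    ∃ γ > 0, ∀ (x₀ : X₀) (xh : Xh),
      γ * Real.sqrt (‖x₀‖ ^ 2 + ‖xh‖ ^ 2) ≤
        sSup {r : ℝ | ∃ y : Y, y ≠ 0 ∧ r = (b₀ x₀ y + bh xh y) / ‖y‖} := by
  have hD : 0 < γ₀ + γh + ‖b₀‖ := by positivity
  refine ⟨γ₀ * γh / (γ₀ + γh + ‖b₀‖), by positivity, ?_⟩
  intro x₀ xh
  by_cases hY : ∃ y : Y, y ≠ 0
  · obtain ⟨y₀, hy₀⟩ := hY
    set s : Set ℝ := {r : ℝ | ∃ y : Y, y ≠ 0 ∧ r = (b₀ x₀ y + bh xh y) / ‖y‖} with hs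
    set S : ℝ := sSup s with hSdef
    -- s is bounded above
    have hbdd : BddAbove s := by
      refine ⟨‖b₀‖ * ‖x₀‖ + ‖bh‖ * ‖xh‖, ?_⟩
      rintro r ⟨y, hy, rfl⟩
      have hyn : (0:ℝ) < ‖y‖ := norm_pos_iff.mpr hy
      rw [div_le_iff₀ hyn]
      have h1 : |b₀ x₀ y| ≤ ‖b₀‖ * ‖x₀‖ * ‖y‖ := by
        calc |b₀ x₀ y| ≤ ‖b₀ x₀‖ * ‖y‖ := (b₀ x₀).le_opNorm y
          _ ≤ ‖b₀‖ * ‖x₀‖ * ‖y‖ := by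
              have := b₀.le_opNorm x₀
              nlinarith [norm_nonneg y]
      have h2 : |bh xh y| ≤ ‖bh‖ * ‖xh‖ * ‖y‖ := by
        calc |bh xh y| ≤ ‖bh xh‖ * ‖y‖ := (bh xh).le_opNorm y
          _ ≤ ‖bh‖ * ‖xh‖ * ‖y‖ := by
              have := bh.le_opNorm xh
              nlinarith [norm_nonneg y]
      nlinarith [abs_nonneg (b₀ x₀ y), le_abs_self (b₀ x₀ y), le_abs_self (bh xh y)]
    -- S is nonnegative
    have hS0 : 0 ≤ S := by
      set r₀ : ℝ := (b₀ x₀ y₀ + bh xh y₀) / ‖y₀‖ with hr₀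
      have hmem : r₀ ∈ s := ⟨y₀, hy₀, rfl⟩
      have hmem' : -r₀ ∈ s := by
        refine ⟨-y₀, neg_ne_zero.mpr hy₀, ?_⟩
        rw [hr₀, norm_neg, map_neg (b₀ x₀), map_neg (bh xh)]
        ring
      have h1 := le_csSup hbdd hmem
      have h2 := le_csSup hbdd hmem'
      linarith
    -- γ₀ ‖x₀‖ ≤ S
    have hx₀ : γ₀ * ‖x₀‖ ≤ S := by
      refine (h₀ x₀).trans (Real.sSup_le ?_ hS0)
      rintro r ⟨y, hker, hy, rfl⟩
      have : b₀ x₀ y / ‖y‖ = (b₀ x₀ y + bh xh y) / ‖y‖ := by rw [hker xh, add_zero]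
      rw [this]
      exact le_csSup hbdd ⟨y, hy, rfl⟩
    -- γh ‖xh‖ ≤ S + ‖b₀‖ ‖x₀‖
    have hxh : γh * ‖xh‖ ≤ S + ‖b₀‖ * ‖x₀‖ := by
      refine (hh xh).trans (Real.sSup_le ?_ (by positivity))
      rintro r ⟨y, hy, rfl⟩
      have hyn : (0:ℝ) < ‖y‖ := norm_pos_iff.mpr hy
      have h1 : (b₀ x₀ y + bh xh y) / ‖y‖ ≤ S := le_csSup hbdd ⟨y, hy, rfl⟩
      have h2 : |b₀ x₀ y| ≤ ‖b₀‖ * ‖x₀‖ * ‖y‖ := by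
        calc |b₀ x₀ y| ≤ ‖b₀ x₀‖ * ‖y‖ := (b₀ x₀).le_opNorm y
          _ ≤ ‖b₀‖ * ‖x₀‖ * ‖y‖ := by
              have := b₀.le_opNorm x₀
              nlinarith [norm_nonneg y]
      rw [div_le_iff₀ hyn] at h1 ⊢
      nlinarith [neg_abs_le (b₀ x₀ y)]
    -- combine
    have hsqrt : Real.sqrt (‖x₀‖ ^ 2 + ‖xh‖ ^ 2) ≤ ‖x₀‖ + ‖xh‖ := by
      rw [show ‖x₀‖ + ‖xh‖ = Real.sqrt ((‖x₀‖ + ‖xh‖) ^ 2) by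
        rw [Real.sqrt_sq (by positivity)]]
      exact Real.sqrt_le_sqrt (by nlinarith [norm_nonneg x₀, norm_nonneg xh])
    have hkey : γ₀ * γh / (γ₀ + γh + ‖b₀‖) * (‖x₀‖ + ‖xh‖) ≤ S := by
      rw [div_mul_eq_mul_div, div_le_iff₀ hD]
      nlinarith [norm_nonneg x₀, norm_nonneg (b₀), hx₀, hxh, mul_le_mul_of_nonneg_left hx₀ (le_of_lt hγh), mul_le_mul_of_nonneg_left hxh (le_of_lt hγ₀), mul_le_mul_of_nonneg_left hx₀ (norm_nonneg b₀)]
    calc γ₀ * γh / (γ₀ + γh + ‖b₀‖) * Real.sqrt (‖x₀‖ ^ 2 + ‖xh‖ ^ 2)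
        ≤ γ₀ * γh / (γ₀ + γh + ‖b₀‖) * (‖x₀‖ + ‖xh‖) := by
          apply mul_le_mul_of_nonneg_left hsqrt (by positivity)
      _ ≤ S := hkey
  · -- Y is trivial: x₀ = 0, xh = 0, and the sup set is empty
    push_neg at hY
    have hx₀ : x₀ = 0 := by
      have h := h₀ x₀
      have hempty : {r : ℝ | ∃ y : Y, (∀ xh : Xh, bh xh y = 0) ∧ y ≠ 0 ∧ r = b₀ x₀ y / ‖y‖} = ∅ := by
        ext r; simp only [Set.mem_setOf_eq, Set.mem_empty_iff_false, iff_false]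
        rintro ⟨y, _, hy, _⟩; exact hy (hY y)
      rw [hempty, Real.sSup_empty] at h
      have := norm_nonneg x₀
      by_contra hne
      have : 0 < ‖x₀‖ := norm_pos_iff.mpr hne
      nlinarith
    have hxh : xh = 0 := by
      have h := hh xh
      have hempty : {r : ℝ | ∃ y : Y, y ≠ 0 ∧ r = bh xh y / ‖y‖} = ∅ := by
        ext r; simp only [Set.mem_setOf_eq, Set.mem_empty_iff_false, iff_false]
        rintro ⟨y, hy, _⟩; exact hy (hY y)
      rw [hempty, Real.sSup_empty] at h
      by_contra hne
      have : 0 < ‖xh‖ := norm_pos_iff.mpr hne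
      nlinarith
    have hempty : {r : ℝ | ∃ y : Y, y ≠ 0 ∧ r = (b₀ x₀ y + bh xh y) / ‖y‖} = ∅ := by
      ext r; simp only [Set.mem_setOf_eq, Set.mem_empty_iff_false, iff_false]
      rintro ⟨y, hy, _⟩; exact hy (hY y)
    rw [hempty, Real.sSup_empty, hx₀, hxh]
    simp
end

section
/- Let Ω ⊂ ℝ^d be a bounded Lipschitz domain and let z ∈ H¹₀(Ω), Θ a symmetric L² matrix field with div Θ ∈ L²(Ω;ℝ^d), and t ∈ (0,1]. Consider the mixed bilinear form B((z,Θ),(δz,δΘ)) := (C⁻¹Θ, δΘ) + t²(div Θ, div δΘ) − (∇z, div δΘ) − (div Θ, ∇δz), where C is a symmetric positive definite fourth-order tensor with bounds independent of t. If the inf-sup condition sup_Θ (div Θ, ∇δz)/(‖Θ‖² + t²‖div Θ‖²)^{1/2} ≥ β‖∇δz‖ holds with β independent of t, then for every right-hand side (g, H, ξ) ∈ L²(Ω) × L²_sym(Ω) × L²(Ω;ℝ^d) the problem B((z,Θ),(δz,δΘ)) = (g, δz) + (H, δΘ) + t^{1/2}(ξ, ∇δz) has a unique solution with ‖Θ‖²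 + t²‖div Θ‖² + ‖z‖² + t‖∇z‖² ≲ ‖g‖² + ‖H‖² + ‖ξ‖², uniformly in t ∈ (0,1]. -/
/-!
Brezzi's argument in the `t`-weighted norm `|||Θ|||_t = (‖Θ‖² + t²‖div Θ‖²)^{1/2}`. Testing the
equations with `(-z, Θ)` cancels the coupling terms and gives `|||Θ|||_t² ≲ D (‖∇z‖ + |||Θ|||_t)`
whenever the residual is bounded by `D (‖∇δz‖ + |||δΘ|||_t)`; testing with `(0, Θ')` and using
the inf-sup condition gives `β ‖∇z‖ ≤ (‖C⁻¹‖ + 1) |||Θ|||_t + D`. Together these yield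
`|||Θ|||_t² + ‖∇z‖² ≲ D²` with a constant independent of `t`. For fixed `t` this bounds the
symmetric form from below on the Hilbert space `Z × HD`, so its Riesz operator is injective with
closed range, and by symmetry the orthogonal complement of the range is its kernel, i.e. zero.
-/

open Set
open scoped RealInnerProductSpace

namespace InnerProductSpace

variable {V : Type _} [NormedAddCommGroup V] [InnerProductSpace ℝ V] [CompleteSpace V]
  {B : V →L[ℝ] V →L[ℝ] ℝ}

theorem norm_continuousLinearMapOfBilin_apply (x : V) :
    ‖continuousLinearMapOfBilin (𝕜 := ℝ) B x‖ = ‖B x‖ :=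
  (toDual ℝ V).symm.norm_map (B x)

theorem continuousLinearMapOfBilin_surjective_of_symm (hB : ∀ x y, B x y = B y x) {C : ℝ}
    (hC : ∀ x, ‖x‖ ≤ C * ‖B x‖) :
    Function.Surjective (continuousLinearMapOfBilin (𝕜 := ℝ) B) := by
  set A := continuousLinearMapOfBilin (𝕜 := ℝ) B
  have hA : AntilipschitzWith C.toNNReal A := A.antilipschitz_of_bound fun x => by
    rw [norm_continuousLinearMapOfBilin_apply]
    exact (hC x).trans (mul_le_mul_of_nonneg_right (Real.le_coe_toNNReal C) (norm_nonneg _))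
  have hclosed : IsClosed (LinearMap.range (A : V →ₗ[ℝ] V) : Set V) := by
    rw [LinearMap.coe_range]
    exact hA.isClosed_range A.uniformContinuous
  have := hclosed.completeSpace_coe
  refine LinearMap.range_eq_top.mp ?_
  rw [← Submodule.orthogonal_eq_bot_iff, Submodule.eq_bot_iff]
  intro v hv
  -- `v ⊥ range A` reads `B w v = 0` for all `w`, and symmetry turns this into `B v = 0`.
  have hBv : B v = 0 := by
    ext w
    rw [← hB, ← continuousLinearMapOfBilin_apply]
    exact (Submodule.mem_orthogonal _ v).mp hv (A w) (LinearMap.mem_range_self _ w)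
  simpa [hBv] using hC v

theorem existsUnique_apply_eq_of_symm (hB : ∀ x y, B x y = B y x) {C : ℝ}
    (hC : ∀ x, ‖x‖ ≤ C * ‖B x‖) (f : StrongDual ℝ V) : ∃! x, B x = f := by
  have hinj : Function.Injective B := fun x x' h => by
    have := hC (x - x')
    rw [map_sub, h, sub_self, norm_zero, mul_zero] at this
    exact sub_eq_zero.mp (norm_le_zero_iff.mp this)
  obtain ⟨x, hx⟩ := continuousLinearMapOfBilin_surjective_of_symm hB hC ((toDual ℝ V).symm f)
  have hBx : B x = f := (toDual ℝ V).symm.injective hx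
  exact ⟨x, hBx, fun y hy => hinj (hy.trans hBx.symm)⟩

end InnerProductSpace

section MixedForm

variable {Z HD L2sc L2v L2s : Type _}
  [NormedAddCommGroup Z] [InnerProductSpace ℝ Z]
  [NormedAddCommGroup HD] [InnerProductSpace ℝ HD]
  [NormedAddCommGroup L2sc] [InnerProductSpace ℝ L2sc]
  [NormedAddCommGroup L2v] [InnerProductSpace ℝ L2v]
  [NormedAddCommGroup L2s] [InnerProductSpace ℝ L2s]
  (embE : Z →L[ℝ] L2sc) (grad : Z →L[ℝ] L2v) (embS : HD →L[ℝ] L2s) (dvg : HD →L[ℝ] L2v)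
  (Cinv : L2s →L[ℝ] L2s)

noncomputable def weightedNorm (t : ℝ) (Θ : HD) : ℝ :=
  √(‖embS Θ‖ ^ 2 + t ^ 2 * ‖dvg Θ‖ ^ 2)

noncomputable def mixedForm (t : ℝ) :
    WithLp 2 (Z × HD) →L[ℝ] WithLp 2 (Z × HD) →L[ℝ] ℝ :=
  let z : WithLp 2 (Z × HD) →L[ℝ] Z := WithLp.fstL 2 ℝ Z HD
  let Θ : WithLp 2 (Z × HD) →L[ℝ] HD := WithLp.sndL 2 ℝ Z HD
  (innerSL ℝ).bilinearComp (Cinv ∘L embS ∘L Θ) (embS ∘L Θ)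
    + t ^ 2 • (innerSL ℝ).bilinearComp (dvg ∘L Θ) (dvg ∘L Θ)
    - (innerSL ℝ).bilinearComp (grad ∘L z) (dvg ∘L Θ)
    - (innerSL ℝ).bilinearComp (dvg ∘L Θ) (grad ∘L z)

noncomputable def loadFunctional (t : ℝ) (g : L2sc) (H : L2s) (ξ : L2v) :
    StrongDual ℝ (WithLp 2 (Z × HD)) :=
  innerSL ℝ g ∘L embE ∘L WithLp.fstL 2 ℝ Z HD + innerSL ℝ H ∘L embS ∘L WithLp.sndL 2 ℝ Z HD
    + √t • innerSL ℝ ξ ∘L grad ∘L WithLp.fstL 2 ℝ Z HD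

variable {embE grad embS dvg Cinv}

@[simp]
theorem mixedForm_apply (t : ℝ) (x y : WithLp 2 (Z × HD)) :
    mixedForm grad embS dvg Cinv t x y = ⟪Cinv (embS x.snd), embS y.snd⟫
      + t ^ 2 * ⟪dvg x.snd, dvg y.snd⟫ - ⟪grad x.fst, dvg y.snd⟫
      - ⟪dvg x.snd, grad y.fst⟫ := by
  simp [mixedForm]

theorem mixedForm_comm (hCsym : ∀ s s' : L2s, ⟪Cinv s, s'⟫ = ⟪s, Cinv s'⟫) (t : ℝ)
    (x y : WithLp 2 (Z × HD)) :
    mixedForm grad embS dvg Cinv t x y = mixedForm grad embS dvg Cinv t y x := by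
  simp only [mixedForm_apply]
  rw [hCsym, real_inner_comm (embS x.snd), real_inner_comm (dvg x.snd) (dvg y.snd),
    real_inner_comm (grad x.fst), real_inner_comm (dvg x.snd)]
  ring

theorem weightedNorm_nonneg (t : ℝ) (Θ : HD) : 0 ≤ weightedNorm embS dvg t Θ :=
  Real.sqrt_nonneg _

theorem sq_weightedNorm (t : ℝ) (Θ : HD) :
    weightedNorm embS dvg t Θ ^ 2 = ‖embS Θ‖ ^ 2 + t ^ 2 * ‖dvg Θ‖ ^ 2 :=
  Real.sq_sqrt (by positivity)

theorem norm_le_weightedNorm (t : ℝ) (Θ : HD) : ‖embS Θ‖ ≤ weightedNorm embS dvg t Θ :=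
  Real.le_sqrt_of_sq_le (le_add_of_nonneg_right (by positivity))

theorem abs_mul_norm_le_weightedNorm (t : ℝ) (Θ : HD) :
    |t| * ‖dvg Θ‖ ≤ weightedNorm embS dvg t Θ :=
  Real.le_sqrt_of_sq_le (by rw [mul_pow, sq_abs]; exact le_add_of_nonneg_left (by positivity))

theorem mul_norm_le_weightedNorm_of_le_one
    (hHDnorm : ∀ Θ : HD, ‖Θ‖ ^ 2 = ‖embS Θ‖ ^ 2 + ‖dvg Θ‖ ^ 2) {t : ℝ} (ht0 : 0 ≤ t)
    (ht1 : t ≤ 1) (Θ : HD) : t * ‖Θ‖ ≤ weightedNorm embS dvg t Θ := by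
  refine Real.le_sqrt_of_sq_le ?_
  have ht2 : t ^ 2 ≤ 1 := pow_le_one₀ ht0 ht1
  rw [mul_pow, hHDnorm]
  nlinarith [sq_nonneg ‖embS Θ‖]

theorem weightedNorm_pos (hHDnorm : ∀ Θ : HD, ‖Θ‖ ^ 2 = ‖embS Θ‖ ^ 2 + ‖dvg Θ‖ ^ 2)
    {t : ℝ} (ht0 : 0 < t) (ht1 : t ≤ 1) {Θ : HD} (hΘ : Θ ≠ 0) :
    0 < weightedNorm embS dvg t Θ :=
  (mul_pos ht0 (norm_pos_iff.mpr hΘ)).trans_le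
    (mul_norm_le_weightedNorm_of_le_one hHDnorm ht0.le ht1 Θ)

theorem min_mul_sq_weightedNorm_le_mixedForm {c₁ : ℝ}
    (hCpos : ∀ s : L2s, c₁ * ‖s‖ ^ 2 ≤ ⟪Cinv s, s⟫) (t : ℝ) (z : Z) (Θ : HD) :
    min c₁ 1 * weightedNorm embS dvg t Θ ^ 2
      ≤ mixedForm grad embS dvg Cinv t (WithLp.toLp 2 (z, Θ)) (WithLp.toLp 2 (-z, Θ)) := by
  simp only [mixedForm_apply, WithLp.toLp_fst, WithLp.toLp_snd, map_neg, inner_neg_right,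
    real_inner_self_eq_norm_sq, real_inner_comm (grad z), sq_weightedNorm]
  have := hCpos (embS Θ)
  have hmin := mul_le_mul_of_nonneg_right (min_le_left c₁ 1) (sq_nonneg ‖embS Θ‖)
  have hmin' := mul_le_mul_of_nonneg_right (min_le_right c₁ 1)
    (mul_nonneg (sq_nonneg t) (sq_nonneg ‖dvg Θ‖))
  linear_combination this + hmin + hmin'

theorem inner_dvg_grad_le (t : ℝ) (z : Z) (Θ : HD) {D : ℝ}
    (hbound : ∀ y, |mixedForm grad embS dvg Cinv t (WithLp.toLp 2 (z, Θ)) y|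
      ≤ D * (‖grad y.fst‖ + weightedNorm embS dvg t y.snd)) (Θ' : HD) :
    ⟪dvg Θ', grad z⟫ ≤ ((‖Cinv‖ + 1) * weightedNorm embS dvg t Θ + D)
      * weightedNorm embS dvg t Θ' := by
  have hB := (abs_le.mp (hbound (WithLp.toLp 2 (0, Θ')))).1
  simp only [mixedForm_apply, WithLp.toLp_fst, WithLp.toLp_snd, map_zero, inner_zero_right,
    norm_zero, zero_add, sub_zero] at hB
  have hC : ⟪Cinv (embS Θ), embS Θ'⟫
      ≤ ‖Cinv‖ * weightedNorm embS dvg t Θ * weightedNorm embS dvg t Θ' :=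
    (real_inner_le_norm _ _).trans <| mul_le_mul (Cinv.le_opNorm_of_le (norm_le_weightedNorm t Θ))
      (norm_le_weightedNorm t Θ') (norm_nonneg _)
      (mul_nonneg (norm_nonneg _) (weightedNorm_nonneg t Θ))
  have hdvg : t ^ 2 * ⟪dvg Θ, dvg Θ'⟫
      ≤ weightedNorm embS dvg t Θ * weightedNorm embS dvg t Θ' :=
    calc t ^ 2 * ⟪dvg Θ, dvg Θ'⟫ ≤ t ^ 2 * (‖dvg Θ‖ * ‖dvg Θ'‖) :=
          mul_le_mul_of_nonneg_left (real_inner_le_norm _ _) (sq_nonneg t)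
      _ = (|t| * ‖dvg Θ‖) * (|t| * ‖dvg Θ'‖) := by rw [← sq_abs]; ring
      _ ≤ _ := mul_le_mul (abs_mul_norm_le_weightedNorm t Θ) (abs_mul_norm_le_weightedNorm t Θ')
          (by positivity) (weightedNorm_nonneg t Θ)
  rw [real_inner_comm]
  linear_combination hB + hC + hdvg

theorem sSup_inner_div_weightedNorm_le
    (hHDnorm : ∀ Θ : HD, ‖Θ‖ ^ 2 = ‖embS Θ‖ ^ 2 + ‖dvg Θ‖ ^ 2) {t : ℝ} (ht0 : 0 < t)
    (ht1 : t ≤ 1) (z : Z) {a : ℝ} (ha : 0 ≤ a)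
    (h : ∀ Θ, ⟪dvg Θ, grad z⟫ ≤ a * weightedNorm embS dvg t Θ) :
    sSup {r : ℝ | ∃ Θ : HD, Θ ≠ 0 ∧ r = ⟪dvg Θ, grad z⟫ / weightedNorm embS dvg t Θ} ≤ a := by
  refine Real.sSup_le ?_ ha
  rintro r ⟨Θ, hΘ, rfl⟩
  exact (div_le_iff₀ (weightedNorm_pos hHDnorm ht0 ht1 hΘ)).mpr (h Θ)

theorem exists_sq_add_sq_le_of_energy_of_infSup {m β A : ℝ} (hm : 0 < m) (hβ : 0 < β)
    (hA : 0 ≤ A) :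
    ∃ K > 0, ∀ u w D : ℝ, 0 ≤ u → 0 ≤ w → 0 ≤ D →
      m * u ^ 2 ≤ D * (w + u) → β * w ≤ A * u + D → u ^ 2 + w ^ 2 ≤ K * D ^ 2 := by
  set c := A / β + 1
  set k := c ^ 2 / m ^ 2 + 2 / (m * β)
  have hk : 0 ≤ k := by positivity
  refine ⟨k + (2 * A ^ 2 * k + 2) / β ^ 2, by positivity, ?_⟩
  intro u w D hu hw hD henergy hinfsup
  have hquad : m * u ^ 2 ≤ c * D * u + D ^ 2 / β := by
    have hwβ : D * w ≤ D * ((A * u + D) / β) :=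
      mul_le_mul_of_nonneg_left ((le_div_iff₀ hβ).mpr (by linarith)) hD
    have hexp : D * ((A * u + D) / β) + D * u = c * D * u + D ^ 2 / β := by
      simp only [c]; field_simp; ring
    linarith
  have hu2 : u ^ 2 ≤ k * D ^ 2 := by
    have hsq := two_mul_le_add_sq (m * u) (c * D)
    have hk' : m ^ 2 * k = c ^ 2 + 2 * m / β := by simp only [k]; field_simp
    refine le_of_mul_le_mul_left ?_ (pow_pos hm 2)
    have := mul_le_mul_of_nonneg_left hquad (by positivity : (0 : ℝ) ≤ 2 * m)
    have hdiv : 2 * m * (D ^ 2 / β) = 2 * m / β * D ^ 2 := by ring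
    nlinarith
  have hw2 : w ^ 2 ≤ (2 * A ^ 2 * k + 2) / β ^ 2 * D ^ 2 := by
    rw [div_mul_eq_mul_div, le_div_iff₀ (by positivity)]
    have h1 : (β * w) ^ 2 ≤ (A * u + D) ^ 2 := pow_le_pow_left₀ (by positivity) hinfsup 2
    nlinarith [sq_nonneg (A * u - D), mul_le_mul_of_nonneg_left hu2 (sq_nonneg A)]
  linarith

theorem exists_sq_weightedNorm_add_sq_norm_grad_le
    (hHDnorm : ∀ Θ : HD, ‖Θ‖ ^ 2 = ‖embS Θ‖ ^ 2 + ‖dvg Θ‖ ^ 2) {c₁ : ℝ} (hc₁ : 0 < c₁)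
    (hCpos : ∀ s : L2s, c₁ * ‖s‖ ^ 2 ≤ ⟪Cinv s, s⟫) {β : ℝ} (hβ : 0 < β)
    (hinfsup : ∀ t ∈ Ioc (0:ℝ) 1, ∀ δz : Z, β * ‖grad δz‖ ≤ sSup {r : ℝ | ∃ Θ : HD, Θ ≠ 0 ∧
      r = ⟪dvg Θ, grad δz⟫ / weightedNorm embS dvg t Θ}) :
    ∃ K > 0, ∀ t ∈ Ioc (0:ℝ) 1, ∀ (z : Z) (Θ : HD) (D : ℝ), 0 ≤ D →
      (∀ y, |mixedForm grad embS dvg Cinv t (WithLp.toLp 2 (z, Θ)) y|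
        ≤ D * (‖grad y.fst‖ + weightedNorm embS dvg t y.snd)) →
      weightedNorm embS dvg t Θ ^ 2 + ‖grad z‖ ^ 2 ≤ K * D ^ 2 := by
  obtain ⟨K, hK, hquad⟩ := exists_sq_add_sq_le_of_energy_of_infSup (lt_min hc₁ one_pos) hβ
    (by positivity : 0 ≤ ‖Cinv‖ + 1)
  refine ⟨K, hK, fun t ht z Θ D hD hbound => hquad _ _ _ (weightedNorm_nonneg t Θ)
    (norm_nonneg _) hD ?_ ?_⟩
  · have hres := hbound (WithLp.toLp 2 (-z, Θ))
    rw [WithLp.toLp_fst, WithLp.toLp_snd, map_neg, norm_neg] at hres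
    exact (min_mul_sq_weightedNorm_le_mixedForm hCpos t z Θ).trans ((le_abs_self _).trans hres)
  · refine (hinfsup t ht z).trans (sSup_inner_div_weightedNorm_le hHDnorm ht.1 ht.2 z ?_
      (inner_dvg_grad_le t z Θ hbound))
    exact add_nonneg (mul_nonneg (by positivity) (weightedNorm_nonneg t Θ)) hD

theorem mul_norm_le_norm_grad_add_weightedNorm (hZnorm : ∀ z : Z, ‖z‖ = ‖grad z‖)
    (hHDnorm : ∀ Θ : HD, ‖Θ‖ ^ 2 = ‖embS Θ‖ ^ 2 + ‖dvg Θ‖ ^ 2) {t : ℝ} (ht0 : 0 ≤ t)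
    (ht1 : t ≤ 1) (y : WithLp 2 (Z × HD)) :
    t * ‖y‖ ≤ ‖grad y.fst‖ + weightedNorm embS dvg t y.snd := by
  have hsq : ‖y‖ ^ 2 ≤ (‖y.fst‖ + ‖y.snd‖) ^ 2 := by
    rw [WithLp.prod_norm_sq_eq_of_L2]
    nlinarith [norm_nonneg y.fst, norm_nonneg y.snd]
  have hy := (pow_le_pow_iff_left₀ (norm_nonneg _) (by positivity) two_ne_zero).mp hsq
  have hfst : t * ‖y.fst‖ ≤ ‖grad y.fst‖ := by
    rw [hZnorm]; exact mul_le_of_le_one_left (norm_nonneg _) ht1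
  nlinarith [mul_norm_le_weightedNorm_of_le_one hHDnorm ht0 ht1 y.snd]

theorem norm_le_mul_norm_mixedForm (hZnorm : ∀ z : Z, ‖z‖ = ‖grad z‖)
    (hHDnorm : ∀ Θ : HD, ‖Θ‖ ^ 2 = ‖embS Θ‖ ^ 2 + ‖dvg Θ‖ ^ 2) {t : ℝ} (ht0 : 0 < t)
    (ht1 : t ≤ 1) {K : ℝ} (hK : 0 ≤ K)
    (hstab : ∀ (z : Z) (Θ : HD) (D : ℝ), 0 ≤ D →
      (∀ y, |mixedForm grad embS dvg Cinv t (WithLp.toLp 2 (z, Θ)) y|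
        ≤ D * (‖grad y.fst‖ + weightedNorm embS dvg t y.snd)) →
      weightedNorm embS dvg t Θ ^ 2 + ‖grad z‖ ^ 2 ≤ K * D ^ 2)
    (x : WithLp 2 (Z × HD)) : ‖x‖ ≤ √K / t ^ 2 * ‖mixedForm grad embS dvg Cinv t x‖ := by
  obtain ⟨z, Θ⟩ := x
  set B := mixedForm grad embS dvg Cinv t (WithLp.toLp 2 (z, Θ))
  have hbound : ∀ y, |B y| ≤ ‖B‖ / t * (‖grad y.fst‖ + weightedNorm embS dvg t y.snd) := by
    intro y
    calc |B y| ≤ ‖B‖ * ‖y‖ := B.le_opNorm y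
      _ ≤ ‖B‖ * ((‖grad y.fst‖ + weightedNorm embS dvg t y.snd) / t) :=
          mul_le_mul_of_nonneg_left ((le_div_iff₀ ht0).mpr (by
            linarith [mul_norm_le_norm_grad_add_weightedNorm hZnorm hHDnorm ht0.le ht1 y]))
            (norm_nonneg B)
      _ = _ := by ring
  have hKB := hstab z Θ (‖B‖ / t) (by positivity) hbound
  have hx : t ^ 2 * ‖WithLp.toLp 2 (z, Θ)‖ ^ 2 ≤ weightedNorm embS dvg t Θ ^ 2 + ‖grad z‖ ^ 2 := by
    rw [WithLp.prod_norm_sq_eq_of_L2, WithLp.toLp_fst, WithLp.toLp_snd, hZnorm]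
    have hΘ := pow_le_pow_left₀ (by positivity)
      (mul_norm_le_weightedNorm_of_le_one hHDnorm ht0.le ht1 Θ) 2
    have ht2 : t ^ 2 ≤ 1 := pow_le_one₀ ht0.le ht1
    nlinarith [sq_nonneg ‖grad z‖]
  refine (pow_le_pow_iff_left₀ (norm_nonneg _) (by positivity) two_ne_zero).mp ?_
  rw [mul_pow, div_pow, Real.sq_sqrt hK, div_mul_eq_mul_div, le_div_iff₀ (by positivity)]
  calc ‖WithLp.toLp 2 (z, Θ)‖ ^ 2 * (t ^ 2) ^ 2
        = t ^ 2 * (t ^ 2 * ‖WithLp.toLp 2 (z, Θ)‖ ^ 2) := by ring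
    _ ≤ t ^ 2 * (K * (‖B‖ / t) ^ 2) := mul_le_mul_of_nonneg_left (hx.trans hKB) (sq_nonneg t)
    _ = K * ‖B‖ ^ 2 := by field_simp

theorem mixedForm_eq_loadFunctional_iff (t : ℝ) (g : L2sc) (H : L2s) (ξ : L2v) (p : Z × HD) :
    mixedForm grad embS dvg Cinv t (WithLp.toLp 2 p) = loadFunctional embE grad embS t g H ξ ↔
      ∀ (δz : Z) (δΘ : HD),
        ⟪Cinv (embS p.2), embS δΘ⟫ + t ^ 2 * ⟪dvg p.2, dvg δΘ⟫ - ⟪grad p.1, dvg δΘ⟫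
          - ⟪dvg p.2, grad δz⟫ = ⟪g, embE δz⟫ + ⟪H, embS δΘ⟫ + √t * ⟪ξ, grad δz⟫ := by
  refine ⟨fun h δz δΘ => ?_, fun h => ContinuousLinearMap.ext fun y => ?_⟩
  · simpa [loadFunctional] using congrArg (· (WithLp.toLp 2 (δz, δΘ))) h
  · obtain ⟨δz, δΘ⟩ := y
    simpa [loadFunctional] using h δz δΘ

theorem abs_loadFunctional_le {Cp : ℝ} (hCp : 0 ≤ Cp)
    (hPoincare : ∀ z : Z, ‖embE z‖ ≤ Cp * ‖grad z‖) {t : ℝ} (ht1 : t ≤ 1)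
    (g : L2sc) (H : L2s) (ξ : L2v) (y : WithLp 2 (Z × HD)) :
    |loadFunctional embE grad embS t g H ξ y|
      ≤ (Cp * ‖g‖ + ‖H‖ + ‖ξ‖) * (‖grad y.fst‖ + weightedNorm embS dvg t y.snd) := by
  simp only [loadFunctional, add_apply, smul_apply, ContinuousLinearMap.comp_apply,
    innerSL_apply_apply, WithLp.fstL_apply, WithLp.sndL_apply, smul_eq_mul]
  have hg : |⟪g, embE y.fst⟫| ≤ Cp * ‖g‖ * ‖grad y.fst‖ :=
    (abs_real_inner_le_norm _ _).trans (by nlinarith [hPoincare y.fst, norm_nonneg g])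
  have hH : |⟪H, embS y.snd⟫| ≤ ‖H‖ * weightedNorm embS dvg t y.snd :=
    (abs_real_inner_le_norm _ _).trans
      (mul_le_mul_of_nonneg_left (norm_le_weightedNorm t y.snd) (norm_nonneg H))
  have hξ : |√t * ⟪ξ, grad y.fst⟫| ≤ ‖ξ‖ * ‖grad y.fst‖ := by
    rw [abs_mul, abs_of_nonneg (Real.sqrt_nonneg t)]
    exact (mul_le_of_le_one_left (abs_nonneg _) (Real.sqrt_le_one.mpr ht1)).trans
      (abs_real_inner_le_norm _ _)
  have hw : 0 ≤ weightedNorm embS dvg t y.snd := weightedNorm_nonneg t y.snd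
  calc _ ≤ |⟪g, embE y.fst⟫| + |⟪H, embS y.snd⟫| + |√t * ⟪ξ, grad y.fst⟫| := abs_add_three _ _ _
    _ ≤ _ := by
      nlinarith [mul_nonneg (mul_nonneg hCp (norm_nonneg g)) hw, mul_nonneg (norm_nonneg ξ) hw,
        mul_nonneg (norm_nonneg H) (norm_nonneg (grad y.fst))]

theorem sum_sq_norms_le_mul_sq_weightedNorm_add_sq_norm_grad {Cp : ℝ}
    (hPoincare : ∀ z : Z, ‖embE z‖ ≤ Cp * ‖grad z‖) {t : ℝ} (ht1 : t ≤ 1) (z : Z) (Θ : HD) :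
    ‖embS Θ‖ ^ 2 + t ^ 2 * ‖dvg Θ‖ ^ 2 + ‖embE z‖ ^ 2 + t * ‖grad z‖ ^ 2
      ≤ (Cp ^ 2 + 1) * (weightedNorm embS dvg t Θ ^ 2 + ‖grad z‖ ^ 2) := by
  have hE : ‖embE z‖ ^ 2 ≤ Cp ^ 2 * ‖grad z‖ ^ 2 := by
    rw [← mul_pow]; exact pow_le_pow_left₀ (norm_nonneg _) (hPoincare z) 2
  rw [sq_weightedNorm]
  nlinarith [sq_nonneg Cp, sq_nonneg ‖grad z‖, sq_nonneg ‖embS Θ‖,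
    mul_nonneg (sq_nonneg t) (sq_nonneg ‖dvg Θ‖)]

end MixedForm

theorem adjoint_mixed_problem_uniformly_well_posed_general
    {Z HD L2sc L2v L2s : Type*}
    [NormedAddCommGroup Z] [InnerProductSpace ℝ Z] [CompleteSpace Z]
    [NormedAddCommGroup HD] [InnerProductSpace ℝ HD] [CompleteSpace HD]
    [NormedAddCommGroup L2sc] [InnerProductSpace ℝ L2sc]
    [NormedAddCommGroup L2v] [InnerProductSpace ℝ L2v]
    [NormedAddCommGroup L2s] [InnerProductSpace ℝ L2s]
    (embE : Z →L[ℝ] L2sc) (grad : Z →L[ℝ] L2v)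
    (embS : HD →L[ℝ] L2s) (dvg : HD →L[ℝ] L2v)
    -- `Z` carries the `H¹₀` norm and `HD` the `H(div)` norm:
    (hZnorm : ∀ z : Z, ‖z‖ = ‖grad z‖)
    (hHDnorm : ∀ Θ : HD, ‖Θ‖ ^ 2 = ‖embS Θ‖ ^ 2 + ‖dvg Θ‖ ^ 2)
    -- Poincaré inequality on `H¹₀(Ω)`:
    (Cp : ℝ) (hCp : 0 < Cp) (hPoincare : ∀ z : Z, ‖embE z‖ ≤ Cp * ‖grad z‖)
    -- `C⁻¹` is symmetric and positive definite, with bounds independent of `t`: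
    (Cinv : L2s →L[ℝ] L2s) (c₁ : ℝ) (hc₁ : 0 < c₁)
    (hCsym : ∀ s s' : L2s, (inner ℝ (Cinv s) s' : ℝ) = inner ℝ s (Cinv s'))
    (hCpos : ∀ s : L2s, c₁ * ‖s‖ ^ 2 ≤ (inner ℝ (Cinv s) s : ℝ))
    -- the `t`-uniform inf-sup condition for `(div Θ, ∇δz)`:
    (β : ℝ) (hβ : 0 < β)
    (hinfsup : ∀ t ∈ Ioc (0:ℝ) 1, ∀ δz : Z,
      β * ‖grad δz‖ ≤ sSup {r : ℝ | ∃ Θ : HD, Θ ≠ 0 ∧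
        r = (inner ℝ (dvg Θ) (grad δz) : ℝ) /
              Real.sqrt (‖embS Θ‖ ^ 2 + t ^ 2 * ‖dvg Θ‖ ^ 2)}) :
    ∃ K > 0, ∀ t ∈ Ioc (0:ℝ) 1, ∀ (g : L2sc) (H : L2s) (ξ : L2v),
      (∃! p : Z × HD, ∀ (δz : Z) (δΘ : HD),
        (inner ℝ (Cinv (embS p.2)) (embS δΘ) : ℝ)
          + t ^ 2 * (inner ℝ (dvg p.2) (dvg δΘ) : ℝ)
          - (inner ℝ (grad p.1) (dvg δΘ) : ℝ) - (inner ℝ (dvg p.2) (grad δz) : ℝ)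
        = (inner ℝ g (embE δz) : ℝ) + (inner ℝ H (embS δΘ) : ℝ)
          + Real.sqrt t * (inner ℝ ξ (grad δz) : ℝ)) ∧
      (∀ (z : Z) (Θ : HD),
        (∀ (δz : Z) (δΘ : HD),
          (inner ℝ (Cinv (embS Θ)) (embS δΘ) : ℝ)
            + t ^ 2 * (inner ℝ (dvg Θ) (dvg δΘ) : ℝ)
            - (inner ℝ (grad z) (dvg δΘ) : ℝ) - (inner ℝ (dvg Θ) (grad δz) : ℝ)
          = (inner ℝ g (embE δz) : ℝ) + (inner ℝ H (embS δΘ) : ℝ)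
            + Real.sqrt t * (inner ℝ ξ (grad δz) : ℝ)) →
        ‖embS Θ‖ ^ 2 + t ^ 2 * ‖dvg Θ‖ ^ 2 + ‖embE z‖ ^ 2 + t * ‖grad z‖ ^ 2
          ≤ K * (‖g‖ ^ 2 + ‖H‖ ^ 2 + ‖ξ‖ ^ 2)) := by
  obtain ⟨K, hK, hstab⟩ :=
    exists_sq_weightedNorm_add_sq_norm_grad_le hHDnorm hc₁ hCpos hβ hinfsup
  refine ⟨3 * (Cp ^ 2 + 1) ^ 2 * K, by positivity, fun t ht g H ξ => ⟨?_, fun z Θ hsol => ?_⟩⟩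
  · have hwell := InnerProductSpace.existsUnique_apply_eq_of_symm (mixedForm_comm hCsym t)
      (norm_le_mul_norm_mixedForm hZnorm hHDnorm ht.1 ht.2 hK.le (hstab t ht))
      (loadFunctional embE grad embS t g H ξ)
    refine ((WithLp.equiv 2 (Z × HD)).symm.existsUnique_congr ?_).mpr hwell
    exact fun p => (mixedForm_eq_loadFunctional_iff t g H ξ p).symm
  · set D := Cp * ‖g‖ + ‖H‖ + ‖ξ‖
    have hB := (mixedForm_eq_loadFunctional_iff t g H ξ (z, Θ)).mpr hsol
    have hzΘ := hstab t ht z Θ D (by positivity) fun y => by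
      rw [hB]; exact abs_loadFunctional_le hCp.le hPoincare ht.2 g H ξ y
    have hD : D ^ 2 ≤ 3 * (Cp ^ 2 + 1) * (‖g‖ ^ 2 + ‖H‖ ^ 2 + ‖ξ‖ ^ 2) := by
      nlinarith [sq_nonneg (Cp * ‖g‖ - ‖H‖), sq_nonneg (Cp * ‖g‖ - ‖ξ‖), sq_nonneg (‖H‖ - ‖ξ‖),
        sq_nonneg Cp, sq_nonneg ‖g‖, sq_nonneg ‖H‖, sq_nonneg ‖ξ‖]
    calc _ ≤ (Cp ^ 2 + 1) * (weightedNorm embS dvg t Θ ^ 2 + ‖grad z‖ ^ 2) :=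
          sum_sq_norms_le_mul_sq_weightedNorm_add_sq_norm_grad hPoincare ht.2 z Θ
      _ ≤ (Cp ^ 2 + 1) * (K * (3 * (Cp ^ 2 + 1) * (‖g‖ ^ 2 + ‖H‖ ^ 2 + ‖ξ‖ ^ 2))) := by
          gcongr; exact hzΘ.trans (by gcongr)
      _ = _ := by ring

/-- Uniform well-posedness of the mixed weak form (adj_weak) of the adjoint
Reissner–Mindlin problem (core of Lemma 5.1), in an abstract Hilbert-space setting:
`Z` models `H¹₀(Ω)` (with embedding `embE` into the scalar `L²` space and gradient
`grad`), `HD` models the symmetric `H(div)` space (with embedding `embS` into the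
symmetric-tensor `L²` space and row-wise divergence `dvg`), and `Cinv` models the
positive definite material tensor `C⁻¹`.  Under the `t`-uniform inf-sup condition
for `(div Θ, ∇δz)` with the weighted norm `(‖Θ‖² + t²‖div Θ‖²)^{1/2}`, the mixed
problem is uniquely solvable for every right-hand side `(g,H,ξ)` with the
`t`-uniform stability bound. -/
theorem adjoint_mixed_problem_uniformly_well_posed
    {Z HD L2sc L2v L2s : Type*}
    [NormedAddCommGroup Z] [InnerProductSpace ℝ Z] [CompleteSpace Z]
    [NormedAddCommGroup HD] [InnerProductSpace ℝ HD] [CompleteSpace HD]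
    [NormedAddCommGroup L2sc] [InnerProductSpace ℝ L2sc] [CompleteSpace L2sc]
    [NormedAddCommGroup L2v] [InnerProductSpace ℝ L2v] [CompleteSpace L2v]
    [NormedAddCommGroup L2s] [InnerProductSpace ℝ L2s] [CompleteSpace L2s]
    (embE : Z →L[ℝ] L2sc) (grad : Z →L[ℝ] L2v)
    (embS : HD →L[ℝ] L2s) (dvg : HD →L[ℝ] L2v)
    -- `Z` carries the `H¹₀` norm and `HD` the `H(div)` norm:
    (hZnorm : ∀ z : Z, ‖z‖ = ‖grad z‖)
    (hHDnorm : ∀ Θ : HD, ‖Θ‖ ^ 2 = ‖embS Θ‖ ^ 2 + ‖dvg Θ‖ ^ 2)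
    -- Poincaré inequality on `H¹₀(Ω)`:
    (Cp : ℝ) (hCp : 0 < Cp) (hPoincare : ∀ z : Z, ‖embE z‖ ≤ Cp * ‖grad z‖)
    -- `C⁻¹` is symmetric and positive definite, with bounds independent of `t`:
    (Cinv : L2s →L[ℝ] L2s) (c₁ : ℝ) (hc₁ : 0 < c₁)
    (hCsym : ∀ s s' : L2s, (inner ℝ (Cinv s) s' : ℝ) = inner ℝ s (Cinv s'))
    (hCpos : ∀ s : L2s, c₁ * ‖s‖ ^ 2 ≤ (inner ℝ (Cinv s) s : ℝ))
    -- the `t`-uniform inf-sup condition for `(div Θ, ∇δz)`: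
    (β : ℝ) (hβ : 0 < β)
    (hinfsup : ∀ t ∈ Ioc (0:ℝ) 1, ∀ δz : Z,
      β * ‖grad δz‖ ≤ sSup {r : ℝ | ∃ Θ : HD, Θ ≠ 0 ∧
        r = (inner ℝ (dvg Θ) (grad δz) : ℝ) /
              Real.sqrt (‖embS Θ‖ ^ 2 + t ^ 2 * ‖dvg Θ‖ ^ 2)}) :
    ∃ K > 0, ∀ t ∈ Ioc (0:ℝ) 1, ∀ (g : L2sc) (H : L2s) (ξ : L2v),
      (∃! p : Z × HD, ∀ (δz : Z) (δΘ : HD),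
        (inner ℝ (Cinv (embS p.2)) (embS δΘ) : ℝ)
          + t ^ 2 * (inner ℝ (dvg p.2) (dvg δΘ) : ℝ)
          - (inner ℝ (grad p.1) (dvg δΘ) : ℝ) - (inner ℝ (dvg p.2) (grad δz) : ℝ)
        = (inner ℝ g (embE δz) : ℝ) + (inner ℝ H (embS δΘ) : ℝ)
          + Real.sqrt t * (inner ℝ ξ (grad δz) : ℝ)) ∧
      (∀ (z : Z) (Θ : HD),
        (∀ (δz : Z) (δΘ : HD),
          (inner ℝ (Cinv (embS Θ)) (embS δΘ) : ℝ)
            + t ^ 2 * (inner ℝ (dvg Θ) (dvg δΘ) : ℝ)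
            - (inner ℝ (grad z) (dvg δΘ) : ℝ) - (inner ℝ (dvg Θ) (grad δz) : ℝ)
          = (inner ℝ g (embE δz) : ℝ) + (inner ℝ H (embS δΘ) : ℝ)
            + Real.sqrt t * (inner ℝ ξ (grad δz) : ℝ)) →
        ‖embS Θ‖ ^ 2 + t ^ 2 * ‖dvg Θ‖ ^ 2 + ‖embE z‖ ^ 2 + t * ‖grad z‖ ^ 2
          ≤ K * (‖g‖ ^ 2 + ‖H‖ ^ 2 + ‖ξ‖ ^ 2)) :=
  adjoint_mixed_problem_uniformly_well_posed_general embE grad embS dvg hZnorm hHDnorm Cp hCp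
    hPoincare Cinv c₁ hc₁ hCsym hCpos β hβ hinfsup
end
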